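/- arXiv:1803.10165 — 2 statements merged into one kernel-verified Lean document; each statement's English description precedes it below -/
import Mathlib

section
/- For any two probability measures ν and ν' on ℝ with finite first moments, |G₀(ν) − G₀(ν')| ≤ (1/m)·|∫ h(Ḡ₀(ν)+z) dν(z) − ∫ h(Ḡ₀(ν)+z) dν'(z)|, where Ḡ₀(ν) is the inverse of H(·,ν) at the point 0. -/
/-!
Write `H(x) = ∫ h(x + z) dν(z)`. Since `h` is monotone and `m`-expanding, `H(x) - H(y) ≥ m (x - y)`
for `y ≤ x`, and since `h` is `M`-Lipschitz, so is `H`. Hence `H` is a strictly increasing continuous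
function with a unique root `a = Ḡ₀(ν)`, its nonnegativity set is `[a, ∞)`, and `G₀(ν) = max 0 a`.
With `b = Ḡ₀(ν')` and `H'` the function of `ν'`,
`|G₀(ν) - G₀(ν')| ≤ |a - b| ≤ |H'(a) - H'(b)| / m = |H(a) - H'(a)| / m`.
-/

open MeasureTheory NNReal

section ExpandingFunction

variable {f : ℝ → ℝ} {m : ℝ}

theorem strictMono_of_mul_sub_le (hm : 0 < m) (hf : ∀ x y, y ≤ x → m * (x - y) ≤ f x - f y) :
    StrictMono f := fun y x hxy => by
  nlinarith [hf x y hxy.le]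

theorem mul_abs_sub_le_abs_sub (hf : ∀ x y, y ≤ x → m * (x - y) ≤ f x - f y) (x y : ℝ) :
    m * |x - y| ≤ |f x - f y| := by
  rcases le_total y x with hyx | hxy
  · rw [abs_of_nonneg (sub_nonneg.2 hyx)]
    exact (hf x y hyx).trans (le_abs_self _)
  · rw [abs_sub_comm, abs_of_nonneg (sub_nonneg.2 hxy), abs_sub_comm]
    exact (hf y x hxy).trans (le_abs_self _)

theorem exists_eq_zero_of_mul_sub_le (hm : 0 < m) (hc : Continuous f)
    (hf : ∀ x y, y ≤ x → m * (x - y) ≤ f x - f y) : ∃ r, f r = 0 := by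
  set c := |f 0| / m
  have hc0 : 0 ≤ c := by positivity
  have hmc : m * c = |f 0| := mul_div_cancel₀ _ hm.ne'
  have hlow : f (-c) ≤ 0 := by
    have := hf 0 (-c) (by linarith)
    linarith [le_abs_self (f 0)]
  have hhigh : 0 ≤ f c := by
    have := hf c 0 hc0
    linarith [neg_abs_le (f 0)]
  exact intermediate_value_univ (-c) c hc ⟨hlow, hhigh⟩

end ExpandingFunction

section StrictMonoRoot

variable {f : ℝ → ℝ} {r : ℝ}

theorem StrictMono.setOf_nonneg_eq_Ici (hf : StrictMono f) (hr : f r = 0) :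
    {x | 0 ≤ f x} = Set.Ici r := by
  ext x
  simp only [Set.mem_ofPred_eq, Set.mem_Ici, ← hr, hf.le_iff_le]

theorem StrictMono.sInf_setOf_nonneg (hf : StrictMono f) (hr : f r = 0) :
    sInf {x | 0 ≤ f x} = r := by
  rw [hf.setOf_nonneg_eq_Ici hr, csInf_Ici]

theorem StrictMono.sInf_setOf_nonneg_and_nonneg (hf : StrictMono f) (hr : f r = 0) :
    sInf {x | 0 ≤ x ∧ 0 ≤ f x} = max 0 r := by
  have hset : {x | 0 ≤ x ∧ 0 ≤ f x} = Set.Ici (max 0 r) := by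
    ext x
    simp only [Set.mem_ofPred_eq, Set.mem_Ici, max_le_iff, ← hr, hf.le_iff_le]
  rw [hset, csInf_Ici]

end StrictMonoRoot

section ShiftedIntegral

variable {h : ℝ → ℝ} {K : ℝ≥0} {m : ℝ} {ν : Measure ℝ}

theorem LipschitzWith.integrable_comp_const_add (hh : LipschitzWith K h) [IsFiniteMeasure ν]
    (hν : Integrable (fun z => z) ν) (x : ℝ) : Integrable (fun z => h (x + z)) ν := by
  refine Integrable.mono' ((integrable_const |h x|).add (hν.abs.const_mul K))
    (hh.continuous.comp (continuous_const_add x)).aestronglyMeasurable (.of_forall fun z => ?_)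
  have hlip : |h (x + z) - h x| ≤ K * |z| := by
    simpa [Real.dist_eq] using hh.dist_le_mul (x + z) x
  simp only [Real.norm_eq_abs, Pi.add_apply]
  linarith [abs_sub_abs_le_abs_sub (h (x + z)) (h x)]

theorem LipschitzWith.integral_comp_add [IsProbabilityMeasure ν] (hh : LipschitzWith K h)
    (hν : Integrable (fun z => z) ν) : LipschitzWith K (fun x => ∫ z, h (x + z) ∂ν) := by
  refine .of_dist_le_mul fun x y => ?_
  rw [dist_eq_norm, ← integral_sub (hh.integrable_comp_const_add hν x)
    (hh.integrable_comp_const_add hν y)]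
  simpa using norm_integral_le_of_norm_le_const (μ := ν)
    (f := fun z => h (x + z) - h (y + z)) (C := K * dist x y)
    (.of_forall fun z => by simpa [dist_eq_norm] using hh.dist_le_mul (x + z) (y + z))

theorem LipschitzWith.mul_sub_le_integral_comp_add_sub [IsProbabilityMeasure ν]
    (hh : LipschitzWith K h) (hν : Integrable (fun z => z) ν)
    (hf : ∀ x y, y ≤ x → m * (x - y) ≤ h x - h y) (x y : ℝ) (hyx : y ≤ x) :
    m * (x - y) ≤ (∫ z, h (x + z) ∂ν) - ∫ z, h (y + z) ∂ν := by
  rw [← integral_sub (hh.integrable_comp_const_add hν x) (hh.integrable_comp_const_add hν y)]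
  calc m * (x - y) = ∫ _, m * (x - y) ∂ν := by simp
    _ ≤ _ := integral_mono (integrable_const _)
      ((hh.integrable_comp_const_add hν x).sub (hh.integrable_comp_const_add hν y))
      fun z => by simpa using hf (x + z) (y + z) (by linarith)

end ShiftedIntegral

theorem G0_lipschitz_estimate_general
    (h : ℝ → ℝ) (m M : ℝ) (hm : 0 < m)
    (hmono : Monotone h)
    (hbil : ∀ x y : ℝ, m * |x - y| ≤ |h x - h y| ∧ |h x - h y| ≤ M * |x - y|)
    (ν ν' : Measure ℝ) [IsProbabilityMeasure ν] [IsProbabilityMeasure ν']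
    (hν : Integrable (fun z : ℝ => z) ν) (hν' : Integrable (fun z : ℝ => z) ν') :
    |sInf {x : ℝ | 0 ≤ x ∧ 0 ≤ ∫ z, h (x + z) ∂ν} -
      sInf {x : ℝ | 0 ≤ x ∧ 0 ≤ ∫ z, h (x + z) ∂ν'}| ≤
      (1 / m) *
        |(∫ z, h (sInf {x : ℝ | 0 ≤ ∫ z, h (x + z) ∂ν} + z) ∂ν) -
          ∫ z, h (sInf {x : ℝ | 0 ≤ ∫ z, h (x + z) ∂ν} + z) ∂ν'| := by
  have hexp : ∀ x y, y ≤ x → m * (x - y) ≤ h x - h y := fun x y hyx => by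
    simpa [abs_of_nonneg (sub_nonneg.2 hyx), abs_of_nonneg (sub_nonneg.2 (hmono hyx))]
      using (hbil x y).1
  have hlip : LipschitzWith (Real.toNNReal M) h := .of_dist_le' fun x y => (hbil x y).2
  have hH := hlip.mul_sub_le_integral_comp_add_sub hν hexp
  have hH' := hlip.mul_sub_le_integral_comp_add_sub hν' hexp
  obtain ⟨a, ha⟩ := exists_eq_zero_of_mul_sub_le hm (hlip.integral_comp_add hν).continuous hH
  obtain ⟨b, hb⟩ := exists_eq_zero_of_mul_sub_le hm (hlip.integral_comp_add hν').continuous hH'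
  have hHmono := strictMono_of_mul_sub_le hm hH
  have hH'mono := strictMono_of_mul_sub_le hm hH'
  rw [hHmono.sInf_setOf_nonneg_and_nonneg ha, hH'mono.sInf_setOf_nonneg_and_nonneg hb,
    hHmono.sInf_setOf_nonneg ha, ha, zero_sub, abs_neg]
  calc |max 0 a - max 0 b| ≤ |a - b| := by
        rw [max_comm 0 a, max_comm 0 b]
        exact abs_max_sub_max_le_abs a b 0
    _ ≤ 1 / m * |(∫ z, h (a + z) ∂ν') - ∫ z, h (b + z) ∂ν'| := by
        rw [one_div, le_inv_mul_iff₀ hm]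
        exact mul_abs_sub_le_abs_sub hH' a b
    _ = 1 / m * |∫ z, h (a + z) ∂ν'| := by rw [hb, sub_zero]

/-- For any two probability measures ν and ν' on ℝ with finite first moments,
`|G₀(ν) − G₀(ν')| ≤ (1/m)·|∫ h(Ḡ₀(ν)+z) dν(z) − ∫ h(Ḡ₀(ν)+z) dν'(z)|`. -/
theorem G0_lipschitz_estimate
    (h : ℝ → ℝ) (m M : ℝ) (hm : 0 < m) (hmM : m ≤ M)
    (hmono : Monotone h)
    (hbil : ∀ x y : ℝ, m * |x - y| ≤ |h x - h y| ∧ |h x - h y| ≤ M * |x - y|)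
    (ν ν' : Measure ℝ) [IsProbabilityMeasure ν] [IsProbabilityMeasure ν']
    (hν : Integrable (fun z : ℝ => z) ν) (hν' : Integrable (fun z : ℝ => z) ν') :
    |sInf {x : ℝ | 0 ≤ x ∧ 0 ≤ ∫ z, h (x + z) ∂ν} -
      sInf {x : ℝ | 0 ≤ x ∧ 0 ≤ ∫ z, h (x + z) ∂ν'}| ≤
      (1 / m) *
        |(∫ z, h (sInf {x : ℝ | 0 ≤ ∫ z, h (x + z) ∂ν} + z) ∂ν) -
          ∫ z, h (sInf {x : ℝ | 0 ≤ ∫ z, h (x + z) ∂ν} + z) ∂ν'| :=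
  G0_lipschitz_estimate_general h m M hm hmono hbil ν ν' hν hν'
end

section
/- Fix a positive integer N. For any two vectors u = (u₁,…,u_N) and ū = (ū₁,…,ū_N) in ℝ^N, define G₀ᴺ(u) = inf{x ≥ 0 : (1/N)·Σ_{i=1}^{N} h(x + uᵢ) ≥ 0} (this is G₀ applied to the empirical measure (1/N)·Σᵢ δ_{uᵢ}). Then |G₀ᴺ(u) − G₀ᴺ(ū)| ≤ (M/m)·(1/N)·Σ_{i=1}^{N} |uᵢ − ūᵢ|. -/
open Finset

/-!
Write `c = (M/m)·(1/N)·Σᵢ |vᵢ − wᵢ|`. Shifting the argument by `c` raises each `h(x + vᵢ)` by at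
least `m c` (monotonicity and the lower Lipschitz bound), while replacing `wᵢ` by `vᵢ` costs at most
`M |vᵢ − wᵢ|`; summed over `i` the two effects balance exactly. Hence every admissible `x` for `w`
gives the admissible point `x + c` for `v`, so `G₀ᴺ(v) ≤ G₀ᴺ(w) + c`, and symmetrically.
-/

theorem Real.sInf_le_sInf_add {S T : Set ℝ} {c : ℝ} (hS : BddBelow S) (hT : T.Nonempty)
    (hTS : ∀ x ∈ T, x + c ∈ S) : sInf S ≤ sInf T + c :=
  sub_le_iff_le_add.1 <| le_csInf hT fun x hx => sub_le_iff_le_add.2 (csInf_le hS (hTS x hx))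

theorem mul_sub_le_sub_of_monotone {h : ℝ → ℝ} {m : ℝ} (hmono : Monotone h)
    (hlow : ∀ x y, m * |x - y| ≤ |h x - h y|) {a b : ℝ} (hab : a ≤ b) :
    m * (b - a) ≤ h b - h a := by
  simpa [abs_of_nonneg (sub_nonneg.2 hab), abs_of_nonneg (sub_nonneg.2 (hmono hab))]
    using hlow b a

section Empirical

variable {ι : Type*} [Fintype ι] {h : ℝ → ℝ} {m M : ℝ}

noncomputable def empiricalMean (h : ℝ → ℝ) (v : ι → ℝ) (x : ℝ) : ℝ :=
  (1 / (Fintype.card ι : ℝ)) * ∑ i, h (x + v i)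

noncomputable def empiricalG0 (h : ℝ → ℝ) (v : ι → ℝ) : ℝ :=
  sInf {x : ℝ | 0 ≤ x ∧ 0 ≤ empiricalMean h v x}

theorem nonempty_setOf_empiricalMean_nonneg (hm : 0 < m)
    (hlow : ∀ a b, a ≤ b → m * (b - a) ≤ h b - h a) (v : ι → ℝ) :
    {x : ℝ | 0 ≤ x ∧ 0 ≤ empiricalMean h v x}.Nonempty := by
  set x₀ := |h 0| / m + ∑ i, |v i|
  have hx₀ : ∀ i, |h 0| / m ≤ x₀ + v i := fun i => by
    linarith [neg_abs_le (v i), single_le_sum (fun j _ => abs_nonneg (v j)) (mem_univ i)]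
  refine ⟨x₀, by positivity, mul_nonneg (by positivity) (sum_nonneg fun i _ => ?_)⟩
  have hmx : |h 0| ≤ m * (x₀ + v i) := (div_le_iff₀' hm).1 (hx₀ i)
  have hgrowth := hlow 0 (x₀ + v i) ((div_nonneg (abs_nonneg _) hm.le).trans (hx₀ i))
  linarith [neg_abs_le (h 0)]

theorem sub_le_apply_add_shift (hlow : ∀ a b, a ≤ b → m * (b - a) ≤ h b - h a)
    (hup : ∀ a b, h a - h b ≤ M * |a - b|) {c : ℝ} (hc : 0 ≤ c) (x v w : ℝ) :
    h (x + w) + m * c - M * |v - w| ≤ h (x + c + v) := by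
  have hshift := hlow (x + v) (x + c + v) (by linarith)
  have hswap := hup (x + w) (x + v)
  rw [show x + w - (x + v) = -(v - w) by ring, abs_neg] at hswap
  linarith

theorem sum_le_sum_shift (hm : 0 < m) (hM : 0 ≤ M)
    (hlow : ∀ a b, a ≤ b → m * (b - a) ≤ h b - h a)
    (hup : ∀ a b, h a - h b ≤ M * |a - b|) (x : ℝ) (v w : ι → ℝ) :
    ∑ i, h (x + w i) ≤
      ∑ i, h (x + (M / m) * ((1 / (Fintype.card ι : ℝ)) * ∑ j, |v j - w j|) + v i) := by
  cases isEmpty_or_nonempty ι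
  · simp
  set c := (M / m) * ((1 / (Fintype.card ι : ℝ)) * ∑ j, |v j - w j|)
  have hc : 0 ≤ c := by positivity
  have hbalance : (Fintype.card ι : ℝ) * (m * c) = M * ∑ j, |v j - w j| := by
    have : (Fintype.card ι : ℝ) ≠ 0 := Nat.cast_ne_zero.2 Fintype.card_ne_zero
    simp only [c]
    field_simp
  have hsum := sum_le_sum fun i (_ : i ∈ univ) => sub_le_apply_add_shift hlow hup hc x (v i) (w i)
  rw [sum_sub_distrib, sum_add_distrib, sum_const, card_univ, nsmul_eq_mul, ← mul_sum,
    hbalance] at hsum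
  linarith

theorem empiricalG0_le_add (hm : 0 < m) (hM : 0 ≤ M)
    (hlow : ∀ a b, a ≤ b → m * (b - a) ≤ h b - h a)
    (hup : ∀ a b, h a - h b ≤ M * |a - b|) (v w : ι → ℝ) :
    empiricalG0 h v ≤
      empiricalG0 h w + (M / m) * ((1 / (Fintype.card ι : ℝ)) * ∑ i, |v i - w i|) := by
  refine Real.sInf_le_sInf_add ⟨0, fun x hx => hx.1⟩
    (nonempty_setOf_empiricalMean_nonneg hm hlow w) fun x ⟨hx, hmean⟩ => ⟨by positivity, ?_⟩
  exact hmean.trans (mul_le_mul_of_nonneg_left (sum_le_sum_shift hm hM hlow hup x v w)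
    (by positivity))

theorem abs_empiricalG0_sub_le (hm : 0 < m) (hM : 0 ≤ M)
    (hlow : ∀ a b, a ≤ b → m * (b - a) ≤ h b - h a)
    (hup : ∀ a b, h a - h b ≤ M * |a - b|) (v w : ι → ℝ) :
    |empiricalG0 h v - empiricalG0 h w| ≤
      (M / m) * ((1 / (Fintype.card ι : ℝ)) * ∑ i, |v i - w i|) := by
  have hvw := empiricalG0_le_add hm hM hlow hup v w
  have hwv := empiricalG0_le_add hm hM hlow hup w v
  simp only [abs_sub_comm (w _)] at hwv
  rw [abs_sub_le_iff]
  constructor <;> linarith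

end Empirical

theorem G0_empirical_lipschitz_general
    (h : ℝ → ℝ) (m M : ℝ) (hm : 0 < m) (hmM : m ≤ M)
    (hmono : Monotone h)
    (hbil : ∀ x y : ℝ, m * |x - y| ≤ |h x - h y| ∧ |h x - h y| ≤ M * |x - y|)
    (N : ℕ) (u ubar : Fin N → ℝ) :
    |sInf {x : ℝ | 0 ≤ x ∧ 0 ≤ (1 / (N : ℝ)) * ∑ i, h (x + u i)} -
      sInf {x : ℝ | 0 ≤ x ∧ 0 ≤ (1 / (N : ℝ)) * ∑ i, h (x + ubar i)}| ≤
      (M / m) * ((1 / (N : ℝ)) * ∑ i, |u i - ubar i|) := by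
  have hlow a b (hab : a ≤ b) : m * (b - a) ≤ h b - h a :=
    mul_sub_le_sub_of_monotone hmono (fun x y => (hbil x y).1) hab
  have hup a b : h a - h b ≤ M * |a - b| := (le_abs_self _).trans (hbil a b).2
  have hG0 := abs_empiricalG0_sub_le hm (hm.le.trans hmM) hlow hup u ubar
  simpa only [empiricalG0, empiricalMean, Fintype.card_fin] using hG0

/-- For the empirical version
`G₀ᴺ(u) = inf{x ≥ 0 : (1/N)·Σᵢ h(x + uᵢ) ≥ 0}`, one has
`|G₀ᴺ(u) − G₀ᴺ(ū)| ≤ (M/m)·(1/N)·Σᵢ |uᵢ − ūᵢ|`. -/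
theorem G0_empirical_lipschitz
    (h : ℝ → ℝ) (m M : ℝ) (hm : 0 < m) (hmM : m ≤ M)
    (hmono : Monotone h)
    (hbil : ∀ x y : ℝ, m * |x - y| ≤ |h x - h y| ∧ |h x - h y| ≤ M * |x - y|)
    (N : ℕ) (hN : 0 < N) (u ubar : Fin N → ℝ) :
    |sInf {x : ℝ | 0 ≤ x ∧ 0 ≤ (1 / (N : ℝ)) * ∑ i, h (x + u i)} -
      sInf {x : ℝ | 0 ≤ x ∧ 0 ≤ (1 / (N : ℝ)) * ∑ i, h (x + ubar i)}| ≤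
      (M / m) * ((1 / (N : ℝ)) * ∑ i, |u i - ubar i|) :=
  G0_empirical_lipschitz_general h m M hm hmM hmono hbil N u ubar
end
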